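/- The coordinatewise order on ℕ^k is a well-quasi-order (Dickson's lemma), and consequently in any lossy counter machine, the set of configurations from which a given downward-closed set is reachable is itself determined by finitely many minimal excluded elements. -/

import Mathlib

/-- Order on counter-machine configurations: equal control state and
coordinatewise `≤` on the counters. -/
def cmLe {Q : Type*} {k : ℕ} (c c' : Q × (Fin k → ℕ)) : Prop :=
  c.1 = c'.1 ∧ ∀ i, c.2 i ≤ c'.2 i

/-!
Since `ℕ^k` is well-quasi-ordered (Dickson) and `Q` is finite, the configuration order `cmLe` is a
well partial order. Downward compatibility lifts from single steps to runs, so if `c` cannot reach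
the downward-closed set `G`, neither can any larger configuration: the non-reaching configurations
form an upward-closed set. In a well partial order such a set is the upward closure of its minimal
elements, which form an antichain and are therefore finitely many.
-/

open Relation

section WellQuasiOrdered

variable {α : Type*} {r : α → α → Prop}

theorem WellQuasiOrdered.exists_minimal_le [IsPreorder α r] (hr : WellQuasiOrdered r) {U : Set α}
    {c : α} (hc : c ∈ U) : ∃ b ∈ U, r b c ∧ ∀ y ∈ U, r y b → r b y := by
  obtain ⟨b, ⟨hbU, hbc⟩, hmin⟩ := hr.wellFounded.has_min {x | x ∈ U ∧ r x c} ⟨c, hc, refl c⟩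
  refine ⟨b, hbU, hbc, fun y hyU hyb => ?_⟩
  by_contra hby
  exact hmin y ⟨hyU, _root_.trans hyb hbc⟩ ⟨hyb, hby⟩

theorem WellQuasiOrdered.exists_finite_generators [IsPartialOrder α r] (hr : WellQuasiOrdered r)
    {U : Set α} (hU : ∀ ⦃x y⦄, x ∈ U → r x y → y ∈ U) :
    ∃ B : Set α, B.Finite ∧ U = {c | ∃ b ∈ B, r b c} := by
  set B := {b ∈ U | ∀ y ∈ U, r y b → y = b}
  have hB : IsAntichain r B := fun a ha b hb hab h => hab (hb.2 a ha.1 h)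
  refine ⟨B, hB.finite_of_wellQuasiOrdered hr, Set.ext fun c => ⟨fun hc => ?_, ?_⟩⟩
  · obtain ⟨b, hbU, hbc, hmin⟩ := hr.exists_minimal_le hc
    exact ⟨b, ⟨hbU, fun y hyU hyb => antisymm hyb (hmin y hyU hyb)⟩, hbc⟩
  · rintro ⟨b, hb, hbc⟩
    exact hU hb.1 hbc

end WellQuasiOrdered

section Simulation

variable {α : Type*} {r step : α → α → Prop}

def DownwardCompatible (r step : α → α → Prop) : Prop :=
  ∀ c' c d, r c' c → step c d → ∃ d', r d' d ∧ ReflTransGen step c' d'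

theorem DownwardCompatible.exists_reflTransGen (h : DownwardCompatible r step) {c' c d : α}
    (hc : r c' c) (hcd : ReflTransGen step c d) : ∃ d', r d' d ∧ ReflTransGen step c' d' := by
  induction hcd with
  | refl => exact ⟨c', hc, .refl⟩
  | tail _ hstep ih =>
    obtain ⟨e, he, hc'e⟩ := ih
    obtain ⟨e', he', hee'⟩ := h e _ _ he hstep
    exact ⟨e', he', hc'e.trans hee'⟩

theorem DownwardCompatible.upwardClosed_setOf_not_reach (h : DownwardCompatible r step)
    {G : Set α} (hG : ∀ ⦃x y⦄, x ∈ G → r y x → y ∈ G) :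
    ∀ ⦃x y⦄, x ∈ {c | ¬ ∃ g ∈ G, ReflTransGen step c g} → r x y →
      y ∈ {c | ¬ ∃ g ∈ G, ReflTransGen step c g} := by
  rintro x y hx hxy ⟨g, hg, hyg⟩
  obtain ⟨g', hg', hxg'⟩ := h.exists_reflTransGen hxy hyg
  exact hx ⟨g', hG hg hg', hxg'⟩

end Simulation

section CounterMachine

variable {Q : Type*} {k : ℕ}

instance : IsPartialOrder (Q × (Fin k → ℕ)) cmLe where
  refl _ := ⟨rfl, fun _ => le_rfl⟩
  trans _ _ _ h h' := ⟨h.1.trans h'.1, fun i => (h.2 i).trans (h'.2 i)⟩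
  antisymm _ _ h h' := Prod.ext h.1 (funext fun i => (h.2 i).antisymm (h'.2 i))

theorem wellQuasiOrdered_cmLe [Finite Q] : WellQuasiOrdered (@cmLe Q k) :=
  (Finite.wellQuasiOrdered (· = ·)).prod wellQuasiOrdered_le

end CounterMachine

/-- Dickson's lemma: the coordinatewise order on `ℕ^k` is a well-quasi-order.
Consequently, for any lossy counter machine (any step relation on
`Q × ℕ^k` that is downward-compatible), the set of configurations from which a
given downward-closed set `G` is reachable has a complement which is the
upward closure of finitely many minimal excluded elements. -/
theorem dickson_and_lossy_reach {k : ℕ} {Q : Type*} [Finite Q] :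
    (∀ f : ℕ → (Fin k → ℕ), ∃ i j, i < j ∧ ∀ m, f i m ≤ f j m) ∧
    ∀ step : (Q × (Fin k → ℕ)) → (Q × (Fin k → ℕ)) → Prop,
      (∀ c' c d, cmLe c' c → step c d →
        ∃ d', cmLe d' d ∧ Relation.ReflTransGen step c' d') →
      ∀ G : Set (Q × (Fin k → ℕ)),
        (∀ ⦃x y⦄, x ∈ G → cmLe y x → y ∈ G) →
        ∃ B : Set (Q × (Fin k → ℕ)), B.Finite ∧
          {c | ¬ ∃ g ∈ G, Relation.ReflTransGen step c g} =
            {c | ∃ b ∈ B, cmLe b c} :=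
  ⟨wellQuasiOrdered_le, fun _ hstep _ hG =>
    wellQuasiOrdered_cmLe.exists_finite_generators
      (DownwardCompatible.upwardClosed_setOf_not_reach hstep hG)⟩
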